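/- (Inner product formula for the Rădulescu-type vectors) Under the q-commutation hypotheses below, for all natural numbers r, s, r', s' with r + s = r' + s', one has ⟨ξ_{r,s}, ξ_{r',s'}⟩ = ∑_{i=0}^{r'} q^{(r-i)(r'-i) + k(r-i) + k(r'-i)}·[r']_q!·[s']_q!·binom(r,i)_q·binom(s,r'-i)_q, where terms with i > r or r' - i > s vanish since the corresponding q-binomial coefficient is 0 (so exponents there may be taken with truncated subtraction). -/

import Mathlib

open ContinuousLinearMap

/-- The q-integer `[n]_q = (1 - q^n)/(1 - q)`. -/
noncomputable def qInt (q : ℝ) (n : ℕ) : ℝ := (1 - q ^ n) / (1 - q)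

/-- The q-factorial `[n]_q! = [1]_q ⋯ [n]_q`, with `[0]_q! = 1`. -/
noncomputable def qFact (q : ℝ) : ℕ → ℝ
  | 0 => 1
  | n + 1 => qFact q n * qInt q (n + 1)

/-- The q-binomial coefficient `binom(n,m)_q`, with value `0` when `m > n`. -/
noncomputable def qBinom (q : ℝ) (n m : ℕ) : ℝ :=
  if m ≤ n then qFact q n / (qFact q m * qFact q (n - m)) else 0

/-! The q-commutation relations let an annihilator be pushed through `ξ_{r,s}`:
`c* ξ_{r,s} = [r]_q ξ_{r-1,s} + q^{r+k} [s]_q ξ_{r,s-1}`, and symmetrically for `c_r*` since `c`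
and `c_r` commute. Moving one creation operator of `ξ_{r',s'}` to the left of the inner product
therefore expresses the Gram matrix through smaller ones: by a recursion in `r'`, and in `s'` when
`r' = 0`. Indexed by the antidiagonal `i + j = r'`, the claimed sum satisfies the same recursion,
by the q-Pascal rule `[i + j]_q = [i]_q + q^i [j]_q` and the absorption identity
`[m+1]_q binom(n, m+1)_q = [n]_q binom(n-1, m)_q`, and has the same initial values. -/

open Finset

section QNumbers

variable {q : ℝ}

@[simp]
lemma qInt_zero : qInt q 0 = 0 := by simp [qInt]

lemma qInt_one (hq : q ≠ 1) : qInt q 1 = 1 := by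
  simp [qInt, div_self (sub_ne_zero.2 hq.symm)]

lemma qInt_eq_geom_sum (hq : q ≠ 1) (n : ℕ) : qInt q n = ∑ i ∈ range n, q ^ i := by
  rw [geom_sum_eq hq, qInt, ← neg_sub, ← neg_sub q, neg_div_neg_eq]

lemma qInt_add (hq : q ≠ 1) (m n : ℕ) : qInt q (m + n) = qInt q m + q ^ m * qInt q n := by
  have : 1 - q ≠ 0 := sub_ne_zero.2 hq.symm
  simp only [qInt]
  field_simp
  ring

lemma qInt_pos (hq₁ : -1 < q) (hq₂ : q ≠ 1) {n : ℕ} (hn : n ≠ 0) : 0 < qInt q n := by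
  rw [qInt_eq_geom_sum hq₂]
  exact geom_sum_pos' (by linarith) hn

lemma qFact_succ (n : ℕ) : qFact q (n + 1) = qFact q n * qInt q (n + 1) := rfl

lemma qFact_pos (hq₁ : -1 < q) (hq₂ : q ≠ 1) (n : ℕ) : 0 < qFact q n := by
  induction n with
  | zero => exact one_pos
  | succ n ih => exact mul_pos ih (qInt_pos hq₁ hq₂ n.succ_ne_zero)

lemma qBinom_zero_right (hq₁ : -1 < q) (hq₂ : q ≠ 1) (n : ℕ) : qBinom q n 0 = 1 := by
  have := (qFact_pos hq₁ hq₂ n).ne'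
  simp [qBinom, qFact, this]

lemma qBinom_of_lt {n m : ℕ} (h : n < m) : qBinom q n m = 0 := by
  simp [qBinom, h.not_ge]

lemma qInt_succ_mul_qBinom_succ (hq₁ : -1 < q) (hq₂ : q ≠ 1) (n m : ℕ) :
    qInt q (m + 1) * qBinom q n (m + 1) = qInt q n * qBinom q (n - 1) m := by
  rcases n with _ | n
  · simp [qBinom_of_lt]
  rcases lt_or_ge n m with h | h
  · simp [qBinom_of_lt, h]
  rw [Nat.add_sub_cancel, qBinom, qBinom, if_pos h, if_pos (Nat.succ_le_succ h),
    Nat.succ_sub_succ, qFact_succ, qFact_succ]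
  have := (qFact_pos hq₁ hq₂ m).ne'
  have := (qFact_pos hq₁ hq₂ (n - m)).ne'
  have := (qInt_pos hq₁ hq₂ m.succ_ne_zero).ne'
  field_simp

end QNumbers

noncomputable def gramSum (q : ℝ) (k r s r' s' : ℕ) : ℝ :=
  ∑ p ∈ antidiagonal r', q ^ ((r - p.1) * p.2 + k * (r - p.1) + k * p.2) *
    qFact q r' * qFact q s' * qBinom q r p.1 * qBinom q s p.2

section GramSum

variable {q : ℝ}

lemma gramSum_eq_sum_range (k r s r' s' : ℕ) :
    gramSum q k r s r' s' = ∑ i ∈ range (r' + 1),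
      q ^ ((r - i) * (r' - i) + k * (r - i) + k * (r' - i)) *
        qFact q r' * qFact q s' * qBinom q r i * qBinom q s (r' - i) :=
  Nat.sum_antidiagonal_eq_sum_range_succ_mk _ r'

lemma gramSum_zero (hq₁ : -1 < q) (hq₂ : q ≠ 1) (k r s s' : ℕ) :
    gramSum q k r s 0 s' = q ^ (k * r) * qFact q s' := by
  simp [gramSum, qBinom_zero_right hq₁ hq₂, qFact]

lemma gramSum_succ (hq₁ : -1 < q) (hq₂ : q ≠ 1) (k r s n s' : ℕ) :
    gramSum q k r s (n + 1) s' =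
      qInt q r * gramSum q k (r - 1) s n s' +
        q ^ (r + k) * qInt q s * gramSum q k r (s - 1) n s' := by
  set e : ℕ → ℕ → ℕ := fun i j => (r - i) * j + k * (r - i) + k * j
  -- The first part of the q-Pascal split vanishes at `i = 0`, the second at `j = 0`.
  have hsplit : ∀ p ∈ antidiagonal (n + 1),
      q ^ e p.1 p.2 * qFact q (n + 1) * qFact q s' * qBinom q r p.1 * qBinom q s p.2 =
        q ^ e p.1 p.2 * qFact q n * qFact q s' * (qInt q p.1 * qBinom q r p.1) * qBinom q s p.2 +
        q ^ (e p.1 p.2 + p.1) * qFact q n * qFact q s' * qBinom q r p.1 *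
          (qInt q p.2 * qBinom q s p.2) := by
    rintro ⟨i, j⟩ hij
    rw [HasAntidiagonal.mem_antidiagonal] at hij
    rw [qFact_succ, ← hij, qInt_add hq₂, pow_add]
    ring
  have hleft : ∀ p ∈ antidiagonal n,
      q ^ e (p.1 + 1) p.2 * qFact q n * qFact q s' *
          (qInt q (p.1 + 1) * qBinom q r (p.1 + 1)) * qBinom q s p.2 =
        qInt q r * (q ^ ((r - 1 - p.1) * p.2 + k * (r - 1 - p.1) + k * p.2) *
          qFact q n * qFact q s' * qBinom q (r - 1) p.1 * qBinom q s p.2) := by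
    rintro ⟨i, j⟩ -
    rw [qInt_succ_mul_qBinom_succ hq₁ hq₂]
    simp only [e, Nat.sub_sub, Nat.add_comm 1 i]
    ring
  have hright : ∀ p ∈ antidiagonal n,
      q ^ (e p.1 (p.2 + 1) + p.1) * qFact q n * qFact q s' * qBinom q r p.1 *
          (qInt q (p.2 + 1) * qBinom q s (p.2 + 1)) =
        q ^ (r + k) * qInt q s * (q ^ ((r - p.1) * p.2 + k * (r - p.1) + k * p.2) *
          qFact q n * qFact q s' * qBinom q r p.1 * qBinom q (s - 1) p.2) := by
    rintro ⟨i, j⟩ -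
    rw [qInt_succ_mul_qBinom_succ hq₁ hq₂]
    rcases lt_or_ge r i with hri | hir
    · simp [qBinom_of_lt hri]
    · obtain ⟨a, rfl⟩ := Nat.exists_eq_add_of_le hir
      simp only [e, Nat.add_sub_cancel_left]
      rw [show a * (j + 1) + k * a + k * (j + 1) + i = i + a + k + (a * j + k * a + k * j) by
        ring, pow_add]
      ring
  unfold gramSum
  rw [sum_congr rfl hsplit, sum_add_distrib, Nat.sum_antidiagonal_succ,
    Nat.sum_antidiagonal_succ', sum_congr rfl hleft, sum_congr rfl hright, ← mul_sum, ← mul_sum]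
  simp

end GramSum

section PowerCommutation

variable {A : Type*} [Ring A] [Algebra ℂ A] {q : ℝ} {a b w : A}

lemma mul_pow_of_mul_eq_smul_add_one (hq : q ≠ 1) (h : a * b = (q : ℂ) • (b * a) + 1)
    (n : ℕ) :
    a * b ^ n = (q : ℂ) ^ n • (b ^ n * a) + (qInt q n : ℂ) • b ^ (n - 1) := by
  induction n with
  | zero => simp
  | succ n ih =>
    have hsucc : qInt q (n + 1) = qInt q n + q ^ n := by rw [qInt_add hq, qInt_one hq, mul_one]
    calc a * b ^ (n + 1) = (a * b ^ n) * b := by rw [pow_succ, mul_assoc]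
      _ = (q : ℂ) ^ n • (b ^ n * (a * b)) + (qInt q n : ℂ) • (b ^ (n - 1) * b) := by
        rw [ih, add_mul, smul_mul_assoc, smul_mul_assoc, mul_assoc]
      _ = (q : ℂ) ^ (n + 1) • (b ^ (n + 1) * a) + (qInt q (n + 1) : ℂ) • b ^ n := by
        rcases n with _ | n
        · simp [h, qInt_one hq]
        rw [h, hsucc, Nat.add_sub_cancel, ← pow_succ, mul_add, mul_smul_comm, ← mul_assoc,
          ← pow_succ, mul_one]
        match_scalars <;> ring

lemma mul_pow_of_mul_eq_add (hq : q ≠ 1) (h : a * b = b * a + w)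
    (hw : w * b = (q : ℂ) • (b * w)) (n : ℕ) :
    a * b ^ n = b ^ n * a + (qInt q n : ℂ) • (b ^ (n - 1) * w) := by
  induction n with
  | zero => simp
  | succ n ih =>
    have hsucc : qInt q (n + 1) = 1 + q * qInt q n := by
      rw [add_comm, qInt_add hq, qInt_one hq, pow_one]
    calc a * b ^ (n + 1) = (a * b ^ n) * b := by rw [pow_succ, mul_assoc]
      _ = b ^ n * (a * b) + (qInt q n : ℂ) • (b ^ (n - 1) * (w * b)) := by
        rw [ih, add_mul, smul_mul_assoc, mul_assoc, mul_assoc]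
      _ = b ^ (n + 1) * a + (qInt q (n + 1) : ℂ) • (b ^ n * w) := by
        rcases n with _ | n
        · simp [h, qInt_one hq]
        rw [h, hw, hsucc, Nat.add_sub_cancel, mul_add, mul_smul_comm, ← mul_assoc, ← mul_assoc,
          ← pow_succ, ← pow_succ]
        match_scalars <;> ring

end PowerCommutation

section Vectors

variable {E : Type*} [NormedAddCommGroup E] [NormedSpace ℂ E] {q : ℝ} {d a b w : E →L[ℂ] E}
  {k : ℕ} {ξ : E}

-- For `r = 0` or `s = 0` the truncated `r - 1`, `s - 1` are harmless, as `[0]_q = 0`.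
lemma lowering_apply_pow_mul_pow (hq : q ≠ 1) (hda : d * a = (q : ℂ) • (a * d) + 1)
    (hdb : d * b = b * d + w) (hwb : w * b = (q : ℂ) • (b * w)) (hdξ : d ξ = 0)
    (hwξ : w ξ = (q : ℂ) ^ k • ξ) (r s : ℕ) :
    d ((a ^ r * b ^ s) ξ) = ((qInt q r : ℝ) : ℂ) • (a ^ (r - 1) * b ^ s) ξ +
      ((q ^ (r + k) * qInt q s : ℝ) : ℂ) • (a ^ r * b ^ (s - 1)) ξ := by
  have hdbξ : d ((b ^ s) ξ) = ((q : ℂ) ^ k * qInt q s) • (b ^ (s - 1)) ξ := by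
    rw [← mul_apply_eq_comp, mul_pow_of_mul_eq_add hq hdb hwb, add_apply, mul_apply_eq_comp, hdξ,
      map_zero, zero_add, smul_apply, mul_apply_eq_comp, hwξ, map_smul, smul_smul, mul_comm]
  simp only [mul_apply_eq_comp] at hdbξ ⊢
  rw [← mul_apply_eq_comp d, mul_pow_of_mul_eq_smul_add_one hq hda]
  simp only [add_apply, smul_apply, mul_apply_eq_comp, hdbξ, map_smul, smul_smul]
  match_scalars <;> ring

end Vectors

section Gram

variable {H : Type*} [NormedAddCommGroup H] [InnerProductSpace ℂ H] [CompleteSpace H] {q : ℝ}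
  {c cr W : H →L[ℂ] H} {k : ℕ} {ξ : H}

lemma inner_pow_mul_pow_succ_mul_pow (hq : q ≠ 1)
    (h1 : adjoint c * c = (q : ℂ) • (c * adjoint c) + 1)
    (h4 : adjoint c * cr = cr * adjoint c + W) (h7 : W * cr = (q : ℂ) • (cr * W))
    (hc : adjoint c ξ = 0) (hW : W ξ = ((q : ℂ) ^ k) • ξ) (r s r' s' : ℕ) :
    inner ℂ ((c ^ r * cr ^ s) ξ) ((c ^ (r' + 1) * cr ^ s') ξ) =
      (qInt q r : ℂ) * inner ℂ ((c ^ (r - 1) * cr ^ s) ξ) ((c ^ r' * cr ^ s') ξ) +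
        ((q ^ (r + k) * qInt q s : ℝ) : ℂ) *
          inner ℂ ((c ^ r * cr ^ (s - 1)) ξ) ((c ^ r' * cr ^ s') ξ) := by
  rw [pow_succ', mul_assoc, mul_apply_eq_comp c, ← adjoint_inner_left c,
    lowering_apply_pow_mul_pow hq h1 h4 h7 hc hW, inner_add_left, inner_smul_left,
    inner_smul_left, Complex.conj_ofReal, Complex.conj_ofReal]

lemma inner_pow_mul_pow_pow_succ (hq : q ≠ 1)
    (h2 : adjoint cr * cr = (q : ℂ) • (cr * adjoint cr) + 1) (h3 : c * cr = cr * c)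
    (h5 : adjoint cr * c = c * adjoint cr + W) (h6 : W * c = (q : ℂ) • (c * W))
    (hcr : adjoint cr ξ = 0) (hW : W ξ = ((q : ℂ) ^ k) • ξ) (r s s' : ℕ) :
    inner ℂ ((c ^ r * cr ^ s) ξ) ((cr ^ (s' + 1)) ξ) =
      (qInt q s : ℂ) * inner ℂ ((c ^ r * cr ^ (s - 1)) ξ) ((cr ^ s') ξ) +
        ((q ^ (s + k) * qInt q r : ℝ) : ℂ) *
          inner ℂ ((c ^ (r - 1) * cr ^ s) ξ) ((cr ^ s') ξ) := by
  have hcomm (m n : ℕ) : c ^ m * cr ^ n = cr ^ n * c ^ m := (Commute.pow_pow h3 m n).eq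
  rw [pow_succ', mul_apply_eq_comp cr, ← adjoint_inner_left cr, hcomm r s,
    lowering_apply_pow_mul_pow hq h2 h5 h6 hcr hW, inner_add_left, inner_smul_left,
    inner_smul_left, Complex.conj_ofReal, Complex.conj_ofReal, ← hcomm, ← hcomm]

lemma inner_pow_mul_pow_pow (hq : q ≠ 1)
    (h2 : adjoint cr * cr = (q : ℂ) • (cr * adjoint cr) + 1) (h3 : c * cr = cr * c)
    (h5 : adjoint cr * c = c * adjoint cr + W) (h6 : W * c = (q : ℂ) • (c * W))
    (hcr : adjoint cr ξ = 0) (hW : W ξ = ((q : ℂ) ^ k) • ξ) (hξ : ‖ξ‖ = 1) (s' : ℕ) :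
    ∀ r s, r + s = s' →
      inner ℂ ((c ^ r * cr ^ s) ξ) ((cr ^ s') ξ) =
        ((q ^ (k * r) * qFact q s' : ℝ) : ℂ) := by
  induction s' with
  | zero =>
    rintro r s hrs
    obtain ⟨rfl, rfl⟩ : r = 0 ∧ s = 0 := by omega
    simp [inner_self_eq_norm_sq_to_K, hξ, qFact]
  | succ n ih =>
    intro r s hrs
    have hs : (qInt q s : ℂ) * inner ℂ ((c ^ r * cr ^ (s - 1)) ξ) ((cr ^ n) ξ) =
        qInt q s * ((q ^ (k * r) * qFact q n : ℝ) : ℂ) := by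
      rcases s with _ | s
      · simp
      · rw [Nat.add_sub_cancel, ih r s (by omega)]
    have hr : ((q ^ (s + k) * qInt q r : ℝ) : ℂ) *
          inner ℂ ((c ^ (r - 1) * cr ^ s) ξ) ((cr ^ n) ξ) =
        ((q ^ s * qInt q r * (q ^ (k * r) * qFact q n) : ℝ) : ℂ) := by
      rcases r with _ | r
      · simp
      · rw [Nat.add_sub_cancel, ih r s (by omega)]
        push_cast
        ring
    have hsplit : qInt q (n + 1) = qInt q s + q ^ s * qInt q r := by
      rw [← hrs, add_comm r, qInt_add hq]
    rw [inner_pow_mul_pow_pow_succ hq h2 h3 h5 h6 hcr hW, hs, hr, qFact_succ, hsplit]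
    push_cast
    ring

lemma inner_pow_mul_pow_eq_gramSum (hq₁ : -1 < q) (hq₂ : q ≠ 1)
    (h1 : adjoint c * c = (q : ℂ) • (c * adjoint c) + 1)
    (h2 : adjoint cr * cr = (q : ℂ) • (cr * adjoint cr) + 1) (h3 : c * cr = cr * c)
    (h4 : adjoint c * cr = cr * adjoint c + W) (h5 : adjoint cr * c = c * adjoint cr + W)
    (h6 : W * c = (q : ℂ) • (c * W)) (h7 : W * cr = (q : ℂ) • (cr * W))
    (hc : adjoint c ξ = 0) (hcr : adjoint cr ξ = 0) (hW : W ξ = ((q : ℂ) ^ k) • ξ)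
    (hξ : ‖ξ‖ = 1) (r' : ℕ) :
    ∀ s' r s, r + s = r' + s' →
      inner ℂ ((c ^ r * cr ^ s) ξ) ((c ^ r' * cr ^ s') ξ) = (gramSum q k r s r' s' : ℂ) := by
  induction r' with
  | zero =>
    intro s' r s hrs
    rw [pow_zero, one_mul, gramSum_zero hq₁ hq₂,
      inner_pow_mul_pow_pow hq₂ h2 h3 h5 h6 hcr hW hξ s' r s (by omega)]
  | succ n ih =>
    intro s' r s hrs
    have hr : (qInt q r : ℂ) * inner ℂ ((c ^ (r - 1) * cr ^ s) ξ) ((c ^ n * cr ^ s') ξ) =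
        qInt q r * gramSum q k (r - 1) s n s' := by
      rcases r with _ | r
      · simp
      · rw [Nat.add_sub_cancel, ih s' r s (by omega)]
    have hs : ((q ^ (r + k) * qInt q s : ℝ) : ℂ) *
          inner ℂ ((c ^ r * cr ^ (s - 1)) ξ) ((c ^ n * cr ^ s') ξ) =
        ((q ^ (r + k) * qInt q s : ℝ) : ℂ) * gramSum q k r (s - 1) n s' := by
      rcases s with _ | s
      · simp
      · rw [Nat.add_sub_cancel, ih s' r s (by omega)]
    rw [inner_pow_mul_pow_succ_mul_pow hq₂ h1 h4 h7 hc hW, hr, hs, gramSum_succ hq₁ hq₂]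
    push_cast
    ring

end Gram

theorem inner_xi_formula_general (q : ℝ) (hq₁ : -1 < q) (hq₂ : q < 1)
    {H : Type*} [NormedAddCommGroup H] [InnerProductSpace ℂ H] [CompleteSpace H]
    (c cr W : H →L[ℂ] H)
    (h1 : adjoint c * c = (q : ℂ) • (c * adjoint c) + 1)
    (h2 : adjoint cr * cr = (q : ℂ) • (cr * adjoint cr) + 1)
    (h3 : c * cr = cr * c)
    (h4 : adjoint c * cr = cr * adjoint c + W)
    (h5 : adjoint cr * c = c * adjoint cr + W)
    (h6 : W * c = (q : ℂ) • (c * W))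
    (h7 : W * cr = (q : ℂ) • (cr * W))
    (k : ℕ) (ξ : H) (hξ : ‖ξ‖ = 1)
    (hc : adjoint c ξ = 0) (hcr : adjoint cr ξ = 0)
    (hW : W ξ = ((q : ℂ) ^ k) • ξ)
    (r s r' s' : ℕ) (hsum : r + s = r' + s') :
    (inner ℂ ((c ^ r * cr ^ s) ξ) ((c ^ r' * cr ^ s') ξ) : ℂ) =
      ((∑ i ∈ Finset.range (r' + 1),
        q ^ ((r - i) * (r' - i) + k * (r - i) + k * (r' - i)) *
          qFact q r' * qFact q s' * qBinom q r i * qBinom q s (r' - i) : ℝ) : ℂ) := by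
  rw [← gramSum_eq_sum_range]
  exact inner_pow_mul_pow_eq_gramSum hq₁ hq₂.ne h1 h2 h3 h4 h5 h6 h7 hc hcr hW hξ
    r' s' r s hsum

/-- Inner product formula for the Rădulescu-type vectors `ξ_{r,s} = c^r c_r^s ξ`. -/
theorem inner_xi_formula (q : ℝ) (hq₁ : -1 < q) (hq₂ : q < 1)
    {H : Type*} [NormedAddCommGroup H] [InnerProductSpace ℂ H] [CompleteSpace H]
    (c cr W : H →L[ℂ] H)
    (h1 : adjoint c * c = (q : ℂ) • (c * adjoint c) + 1)
    (h2 : adjoint cr * cr = (q : ℂ) • (cr * adjoint cr) + 1)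
    (h3 : c * cr = cr * c)
    (h4 : adjoint c * cr = cr * adjoint c + W)
    (h5 : adjoint cr * c = c * adjoint cr + W)
    (h6 : W * c = (q : ℂ) • (c * W))
    (h7 : W * cr = (q : ℂ) • (cr * W))
    (h8 : adjoint c * W = (q : ℂ) • (W * adjoint c))
    (h9 : adjoint cr * W = (q : ℂ) • (W * adjoint cr))
    (k : ℕ) (ξ : H) (hξ : ‖ξ‖ = 1)
    (hc : adjoint c ξ = 0) (hcr : adjoint cr ξ = 0)
    (hW : W ξ = ((q : ℂ) ^ k) • ξ)
    (r s r' s' : ℕ) (hsum : r + s = r' + s') :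
    (inner ℂ ((c ^ r * cr ^ s) ξ) ((c ^ r' * cr ^ s') ξ) : ℂ) =
      ((∑ i ∈ Finset.range (r' + 1),
        q ^ ((r - i) * (r' - i) + k * (r - i) + k * (r' - i)) *
          qFact q r' * qFact q s' * qBinom q r i * qBinom q s (r' - i) : ℝ) : ℂ) :=
  inner_xi_formula_general q hq₁ hq₂ c cr W h1 h2 h3 h4 h5 h6 h7 k ξ hξ hc hcr hW r s r' s' hsum
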